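/- arXiv:1510.04497 — 4 statements merged into one kernel-verified Lean document; each statement's English description precedes it below -/
import Mathlib

section
/- In a regular category, given a commutative diagram with morphisms c₁ : C₁ → C, c₂ : C₂ → C, d₁ : D₁ → D, d₂ : D₂ → D, and vertical morphisms f₁ : C₁ → D₁, f₂ : C₂ → D₂, f : C → D satisfying f ∘ c₁ = d₁ ∘ f₁ and f ∘ c₂ = d₂ ∘ f₂, if f₁ and f₂ are regular epimorphisms and f is a monomorphism, then the induced morphism C₁ ×_C C₂ → D₁ ×_D D₂ between the pullbacks is a regular epimorphism. -/
/-!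
Since `f` is mono, `C₁ ×_C C₂ ≅ C₁ ×_D C₂`. Over the fixed base `D`, the map
`C₁ ×_D C₂ ⟶ D₁ ×_D D₂` is a base change of `f₁` followed by a base change of `f₂`, so it lies in
any class of morphisms stable under base change and composition, such as the regular epimorphisms
of a regular category.
-/

open CategoryTheory CategoryTheory.Limits

namespace CategoryTheory

variable {C : Type*} [Category C]

instance Limits.pullback.isIso_map_comp_mono {X Y Z W : C} (f : X ⟶ Z) (g : Y ⟶ Z) (i : Z ⟶ W) [Mono i]
    [HasPullback f g] :
    IsIso (pullback.map f g (f ≫ i) (g ≫ i) (𝟙 X) (𝟙 Y) i (by simp) (by simp)) :=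
  ⟨pullback.lift (pullback.fst _ _) (pullback.snd _ _)
      (by rw [← cancel_mono i, Category.assoc, Category.assoc, pullback.condition]),
    by ext <;> simp [pullback.map, pullback.lift_fst, pullback.lift_snd],
    by ext <;> simp [pullback.map, pullback.lift_fst, pullback.lift_snd]⟩

namespace MorphismProperty

theorem pullbackMap_of_mono (P : MorphismProperty C) [P.IsStableUnderBaseChange]
    [P.IsStableUnderComposition] [HasPullbacks C] {C₁ C₂ Cm D₁ D₂ D : C}
    {c₁ : C₁ ⟶ Cm} {c₂ : C₂ ⟶ Cm} {d₁ : D₁ ⟶ D} {d₂ : D₂ ⟶ D}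
    {f₁ : C₁ ⟶ D₁} {f₂ : C₂ ⟶ D₂} {f : Cm ⟶ D}
    (h₁ : c₁ ≫ f = f₁ ≫ d₁) (h₂ : c₂ ≫ f = f₂ ≫ d₂) (hf₁ : P f₁) (hf₂ : P f₂) [Mono f] :
    P (pullback.map c₁ c₂ d₁ d₂ f₁ f₂ f h₁ h₂) := by
  have hfactor : pullback.map c₁ c₂ d₁ d₂ f₁ f₂ f h₁ h₂ =
      pullback.map c₁ c₂ (c₁ ≫ f) (c₂ ≫ f) (𝟙 _) (𝟙 _) f (by simp) (by simp) ≫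
        pullback.map (c₁ ≫ f) (c₂ ≫ f) d₁ d₂ f₁ f₂ (𝟙 D) (by simp [h₁]) (by simp [h₂]) := by
    ext <;> simp [pullback.map, pullback.lift_fst, pullback.lift_snd, pullback.lift_fst_assoc,
      pullback.lift_snd_assoc]
  rw [hfactor, P.cancel_left_of_respectsIso]
  exact P.pullbackMap hf₁ hf₂ h₁ h₂

theorem regularEpi_isStableUnderBaseChange [HasPullbacks C]
    (hstab : ∀ {P Q R : C} (f : P ⟶ R) (g : Q ⟶ R),
      Nonempty (RegularEpi g) → Nonempty (RegularEpi (pullback.fst f g))) :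
    (regularEpi C).IsStableUnderBaseChange :=
  .mk' fun _ _ _ f g _ hg ↦ ⟨hstab f g hg.regularEpi⟩

theorem regularEpi_isStableUnderComposition
    (hcomp : ∀ {P Q R : C} (f : P ⟶ Q) (g : Q ⟶ R),
      Nonempty (RegularEpi f) → Nonempty (RegularEpi g) → Nonempty (RegularEpi (f ≫ g))) :
    (regularEpi C).IsStableUnderComposition :=
  ⟨fun f g hf hg ↦ ⟨hcomp f g hf.regularEpi hg.regularEpi⟩⟩

end MorphismProperty

end CategoryTheory

/-- In a regular category (finite limits, regular epis stable under pullback and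
closed under composition), the induced morphism between pullbacks along a mono,
with regular-epi vertical legs, is a regular epimorphism. -/
theorem stmt0 {C : Type*} [Category C] [HasFiniteLimits C]
    (hstab : ∀ {P Q R : C} (f : P ⟶ R) (g : Q ⟶ R),
      Nonempty (RegularEpi g) → Nonempty (RegularEpi (pullback.fst f g)))
    (hcomp : ∀ {P Q R : C} (f : P ⟶ Q) (g : Q ⟶ R),
      Nonempty (RegularEpi f) → Nonempty (RegularEpi g) → Nonempty (RegularEpi (f ≫ g)))
    {C₁ C₂ Cm D₁ D₂ D : C}
    (c₁ : C₁ ⟶ Cm) (c₂ : C₂ ⟶ Cm) (d₁ : D₁ ⟶ D) (d₂ : D₂ ⟶ D)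
    (f₁ : C₁ ⟶ D₁) (f₂ : C₂ ⟶ D₂) (f : Cm ⟶ D)
    (h₁ : c₁ ≫ f = f₁ ≫ d₁) (h₂ : c₂ ≫ f = f₂ ≫ d₂)
    (hf₁ : Nonempty (RegularEpi f₁)) (hf₂ : Nonempty (RegularEpi f₂)) [Mono f] :
    Nonempty (RegularEpi (pullback.map c₁ c₂ d₁ d₂ f₁ f₂ f h₁ h₂)) :=
  have := MorphismProperty.regularEpi_isStableUnderBaseChange hstab
  have := MorphismProperty.regularEpi_isStableUnderComposition hcomp
  (MorphismProperty.pullbackMap_of_mono (.regularEpi C) h₁ h₂ ⟨hf₁⟩ ⟨hf₂⟩).regularEpi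
end

section
/- Conversely, let A be a group and X, Y normal subgroups of A. If there exists a group homomorphism p : A₃ → A, where A₃ = {(a,b,c) ∈ A³ : a⁻¹b ∈ X, b⁻¹c ∈ Y}, satisfying p(a,b,b) = a for all (a,b) with a⁻¹b ∈ X and p(b,b,c) = c for all (b,c) with b⁻¹c ∈ Y, then [X,Y] = 1. -/
/-- The commutator subgroup `[P, Q]` generated by all `p⁻¹ q⁻¹ p q`. -/
def commSub {G : Type*} [Group G] (P Q : Subgroup G) : Subgroup G :=
  Subgroup.closure {g : G | ∃ p ∈ P, ∃ q ∈ Q, g = p⁻¹ * q⁻¹ * p * q}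

/-! Both factorisations `(x, 1, y) = (x, 1, 1) * (1, 1, y) = (1, 1, y) * (x, 1, 1)` in `A₃`
are sent by `p` to the product of `p (x, 1, 1) = x` and `p (1, 1, y) = y`, so `x * y = y * x`. -/

theorem commSub_eq_bot_of_commute {G : Type*} [Group G] {P Q : Subgroup G}
    (h : ∀ x ∈ P, ∀ y ∈ Q, Commute x y) : commSub P Q = ⊥ := by
  rw [commSub, Subgroup.closure_eq_bot_iff]
  rintro _ ⟨x, hx, y, hy, rfl⟩
  rw [Set.mem_singleton_iff, (h x hx y hy).inv_inv.eq]
  group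

theorem commute_of_pregroupoid {A : Type*} [Group A] {X Y : Subgroup A} {p : A → A → A → A}
    (hmul : ∀ a b c a' b' c' : A, a⁻¹ * b ∈ X → b⁻¹ * c ∈ Y →
      a'⁻¹ * b' ∈ X → b'⁻¹ * c' ∈ Y →
      p (a * a') (b * b') (c * c') = p a b c * p a' b' c')
    (h1 : ∀ a b : A, a⁻¹ * b ∈ X → p a b b = a)
    (h2 : ∀ b c : A, b⁻¹ * c ∈ Y → p b b c = c) {x y : A} (hx : x ∈ X) (hy : y ∈ Y) :
    Commute x y := by
  have hx' : x⁻¹ * 1 ∈ X := by simpa using hx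
  have hy' : (1 : A)⁻¹ * y ∈ Y := by simpa using hy
  have hX : (1 : A)⁻¹ * 1 ∈ X := by simp
  have hY : (1 : A)⁻¹ * 1 ∈ Y := by simp
  calc x * y = p x 1 1 * p 1 1 y := by rw [h1 x 1 hx', h2 1 y hy']
    _ = p (x * 1) (1 * 1) (1 * y) := (hmul _ _ _ _ _ _ hx' hY hX hy').symm
    _ = p (1 * x) (1 * 1) (y * 1) := by simp only [mul_one, one_mul]
    _ = p 1 1 y * p x 1 1 := hmul _ _ _ _ _ _ hX hy' hx' hY
    _ = y * x := by rw [h1 x 1 hx', h2 1 y hy']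

theorem stmt11_general {A : Type*} [Group A] (X Y : Subgroup A)
    (p : A → A → A → A)
    (hmul : ∀ a b c a' b' c' : A, a⁻¹ * b ∈ X → b⁻¹ * c ∈ Y →
      a'⁻¹ * b' ∈ X → b'⁻¹ * c' ∈ Y →
      p (a * a') (b * b') (c * c') = p a b c * p a' b' c')
    (h1 : ∀ a b : A, a⁻¹ * b ∈ X → p a b b = a)
    (h2 : ∀ b c : A, b⁻¹ * c ∈ Y → p b b c = c) :
    commSub X Y = ⊥ :=
  commSub_eq_bot_of_commute fun _ hx _ hy => commute_of_pregroupoid hmul h1 h2 hx hy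

/-- If `X`, `Y` are normal subgroups of `A` and there is an operation `p`,
multiplicative on the subgroup `A₃ = {(a,b,c) : a⁻¹b ∈ X, b⁻¹c ∈ Y}` of `A³`,
with `p(a,b,b) = a` and `p(b,b,c) = c`, then `[X,Y] = 1`. -/
theorem stmt11 {A : Type*} [Group A] (X Y : Subgroup A) [X.Normal] [Y.Normal]
    (p : A → A → A → A)
    (hmul : ∀ a b c a' b' c' : A, a⁻¹ * b ∈ X → b⁻¹ * c ∈ Y →
      a'⁻¹ * b' ∈ X → b'⁻¹ * c' ∈ Y →
      p (a * a') (b * b') (c * c') = p a b c * p a' b' c')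
    (h1 : ∀ a b : A, a⁻¹ * b ∈ X → p a b b = a)
    (h2 : ∀ b c : A, b⁻¹ * c ∈ Y → p b b c = c) :
    commSub X Y = ⊥ :=
  stmt11_general X Y p hmul h1 h2
end

section
/- Let A be a group with normal subgroups X, Y, and let E = A ×_{A/X} A and F = A ×_{A/Y} A be the corresponding congruence subgroups of A × A. Then the equivalence relations E and F centralize each other in the Smith sense (admit a connector/partial Mal'tsev operation) if and only if [X,Y] = 1. -/
theorem commSub_eq_bot_iff {G : Type*} [Group G] (P Q : Subgroup G) :
    commSub P Q = ⊥ ↔ ∀ p ∈ P, ∀ q ∈ Q, Commute p q := by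
  rw [commSub, Subgroup.closure_eq_bot_iff]
  constructor
  · intro h p hp q hq
    have hpq : p⁻¹ * q⁻¹ * p * q = 1 := h ⟨p, hp, q, hq, rfl⟩
    calc p * q = q * p * (p⁻¹ * q⁻¹ * p * q) := by group
      _ = q * p := by rw [hpq, mul_one]
  · rintro h _ ⟨p, hp, q, hq, rfl⟩
    rw [Set.mem_singleton_iff, mul_assoc _ p, (h p hp q hq).eq]
    group

section Connector

variable {A : Type*} [Group A]

def IsConnector (X Y : Subgroup A) (p : A → A → A → A) : Prop :=
  (∀ a b c a' b' c' : A, a⁻¹ * b ∈ X → b⁻¹ * c ∈ Y →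
      a'⁻¹ * b' ∈ X → b'⁻¹ * c' ∈ Y →
      p (a * a') (b * b') (c * c') = p a b c * p a' b' c') ∧
    (∀ a b : A, a⁻¹ * b ∈ X → p a b b = a) ∧
    (∀ b c : A, b⁻¹ * c ∈ Y → p b b c = c)

/-- Both `x * y` and `y * x` are the value of the connector at `(x, 1, y)`, factored as
`(x, 1, 1) * (1, 1, y)` and as `(1, 1, y) * (x, 1, 1)`. -/
theorem IsConnector.commute {X Y : Subgroup A} {p : A → A → A → A} (hp : IsConnector X Y p)
    {x y : A} (hx : x ∈ X) (hy : y ∈ Y) : Commute x y := by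
  obtain ⟨hmul, hleft, hright⟩ := hp
  have hx' : x⁻¹ * 1 ∈ X := by simpa using hx
  have hy' : (1 : A)⁻¹ * y ∈ Y := by simpa using hy
  have h1X : (1 : A)⁻¹ * 1 ∈ X := by simp
  have h1Y : (1 : A)⁻¹ * 1 ∈ Y := by simp
  have hxy := hmul x 1 1 1 1 y hx' h1Y h1X hy'
  have hyx := hmul 1 1 y x 1 1 h1X hy' hx' h1Y
  rw [hleft x 1 hx', hright 1 y hy'] at hxy hyx
  simp only [mul_one, one_mul] at hxy hyx
  exact hxy.symm.trans hyx

/-- `a b⁻¹ c` is multiplicative on `E ×_A F` because `a' b'⁻¹ ∈ X` (by normality) commutes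
with `b⁻¹ c ∈ Y`. -/
theorem isConnector_mul_inv_mul (X Y : Subgroup A) [X.Normal]
    (h : ∀ x ∈ X, ∀ y ∈ Y, Commute x y) : IsConnector X Y fun a b c => a * b⁻¹ * c := by
  refine ⟨fun a b c a' b' c' _ hbc hab' _ => ?_, fun _ _ _ => by group, fun _ _ _ => by group⟩
  have hX : a' * b'⁻¹ ∈ X := by
    simpa [mul_assoc] using Subgroup.Normal.conj_mem ‹_› _ (inv_mem hab') b'
  calc a * a' * (b * b')⁻¹ * (c * c') = a * ((a' * b'⁻¹) * (b⁻¹ * c)) * c' := by group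
    _ = a * ((b⁻¹ * c) * (a' * b'⁻¹)) * c' := by rw [(h _ hX _ hbc).eq]
    _ = a * b⁻¹ * c * (a' * b'⁻¹ * c') := by group

end Connector

theorem stmt12_general {A : Type*} [Group A] (X Y : Subgroup A) [X.Normal] :
    (∃ p : A → A → A → A,
      (∀ a b c a' b' c' : A, a⁻¹ * b ∈ X → b⁻¹ * c ∈ Y →
        a'⁻¹ * b' ∈ X → b'⁻¹ * c' ∈ Y →
        p (a * a') (b * b') (c * c') = p a b c * p a' b' c') ∧
      (∀ a b : A, a⁻¹ * b ∈ X → p a b b = a) ∧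
      (∀ b c : A, b⁻¹ * c ∈ Y → p b b c = c)) ↔
    commSub X Y = ⊥ := by
  change (∃ p, IsConnector X Y p) ↔ _
  rw [commSub_eq_bot_iff]
  exact ⟨fun ⟨_, hp⟩ _ hx _ hy => hp.commute hx hy,
    fun h => ⟨_, isConnector_mul_inv_mul X Y h⟩⟩

/-- For normal subgroups `X`, `Y` of `A`, the congruences
`E = {(a,b) : a⁻¹b ∈ X}` and `F = {(a,b) : a⁻¹b ∈ Y}` centralize each other in the
Smith sense (there is a connector, i.e. a partial Mal'tsev operation on
`E ×_A F = {(a,b,c) : a⁻¹b ∈ X, b⁻¹c ∈ Y}`, multiplicative on this subgroup of `A³`,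
with `p(a,b,b) = a` and `p(b,b,c) = c`) if and only if `[X,Y] = 1`. -/
theorem stmt12 {A : Type*} [Group A] (X Y : Subgroup A) [X.Normal] [Y.Normal] :
    (∃ p : A → A → A → A,
      (∀ a b c a' b' c' : A, a⁻¹ * b ∈ X → b⁻¹ * c ∈ Y →
        a'⁻¹ * b' ∈ X → b'⁻¹ * c' ∈ Y →
        p (a * a') (b * b') (c * c') = p a b c * p a' b' c') ∧
      (∀ a b : A, a⁻¹ * b ∈ X → p a b b = a) ∧
      (∀ b c : A, b⁻¹ * c ∈ Y → p b b c = c)) ↔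
    commSub X Y = ⊥ :=
  stmt12_general X Y
end

section
/- Let A be a group and X, Y normal subgroups. The canonical homomorphism γ₁ : (A*X) ×_A (A*Y) → A₃ = A ×_{A/X} A ×_{A/Y} A, sending a pair (u, v) to ([1,x](u), [1,0](u), [1,y](v)) where [1,x] : A*X → A and [1,y] : A*Y → A are induced by inclusions and [1,0] kills X (resp. Y), is a surjective homomorphism. -/
open Monoid

variable {A : Type*} [Group A]

/-- The retraction `[1,0] : A ∗ X →* A` killing the subgroup `X`. -/
def retr (X : Subgroup A) : Coprod A X →* A :=
  Coprod.lift (MonoidHom.id A) (1 : X →* A)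

/-- The evaluation `[1,x] : A ∗ X →* A` induced by the identity and the inclusion. -/
def eval (X : Subgroup A) : Coprod A X →* A :=
  Coprod.lift (MonoidHom.id A) X.subtype

/-! `[1,x]` and `[1,0]` agree on `A` and differ on `X` only by elements of `X`, so they agree
modulo a normal `X`. Conversely, `inl b * inr x` has `[1,0]`-image `b` and `[1,x]`-image `b * x`,
which realises every pair of `A ×_{A/X} A`. -/

theorem mk'_comp_eval (X : Subgroup A) [X.Normal] :
    (QuotientGroup.mk' X).comp (eval X) = (QuotientGroup.mk' X).comp (retr X) := by
  ext x
  · rfl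
  · simp [eval, retr]

theorem eval_mk_eq_retr (X : Subgroup A) [X.Normal] (u : Coprod A X) :
    (eval X u : A ⧸ X) = retr X u :=
  DFunLike.congr_fun (mk'_comp_eval X) u

@[simp]
theorem retr_inl_mul_inr (X : Subgroup A) (b : A) (x : X) :
    retr X (Coprod.inl b * Coprod.inr x) = b := by
  simp [retr]

@[simp]
theorem eval_inl_mul_inr (X : Subgroup A) (b : A) (x : X) :
    eval X (Coprod.inl b * Coprod.inr x) = b * x := by
  simp [eval]

theorem exists_retr_eq_eval_eq (X : Subgroup A) {a b : A} (h : b⁻¹ * a ∈ X) :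
    ∃ u : Coprod A X, retr X u = b ∧ eval X u = a :=
  ⟨Coprod.inl b * Coprod.inr ⟨b⁻¹ * a, h⟩, by simp⟩

/-- For normal subgroups `X`, `Y` of `A`, the canonical homomorphism
`γ₁ : (A ∗ X) ×_A (A ∗ Y) → A₃ = A ×_{A/X} A ×_{A/Y} A`,
`(u,v) ↦ ([1,x](u), [1,0](u), [1,y](v))`, is well defined (it lands in `A₃`) and
surjective. -/
theorem stmt18 (X Y : Subgroup A) [X.Normal] [Y.Normal] :
    (∀ (u : Coprod A X) (v : Coprod A Y), retr X u = retr Y v →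
      (eval X u)⁻¹ * retr X u ∈ X ∧ (retr X u)⁻¹ * eval Y v ∈ Y) ∧
    (∀ a b c : A, a⁻¹ * b ∈ X → b⁻¹ * c ∈ Y →
      ∃ (u : Coprod A X) (v : Coprod A Y),
        retr X u = retr Y v ∧ eval X u = a ∧ retr X u = b ∧ eval Y v = c) := by
  refine ⟨fun u v huv => ⟨?_, ?_⟩, fun a b c hab hbc => ?_⟩
  · exact QuotientGroup.eq.mp (eval_mk_eq_retr X u)
  · exact huv ▸ QuotientGroup.eq.mp (eval_mk_eq_retr Y v).symm
  · obtain ⟨u, hu, hua⟩ := exists_retr_eq_eval_eq X (by simpa using X.inv_mem hab)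
    obtain ⟨v, hv, hvc⟩ := exists_retr_eq_eval_eq Y hbc
    exact ⟨u, v, hu.trans hv.symm, hua, hu, hvc⟩
end
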